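/- arXiv:2110.01110 — 3 statements merged into one kernel-verified Lean document; each statement's English description precedes it below -/
import Mathlib

section
/- Let z, ẑ ∈ ℝ, let l < 0 < u be real bounds with l ≤ ẑ ≤ u, and let δ ∈ {0,1}. Then the system of inequalities { z ≥ ẑ, z ≥ 0, z ≤ ẑ - l(1-δ), z ≤ u·δ } holds for some δ ∈ {0,1} if and only if z = max(ẑ, 0). -/
/-!
Fixing `δ = 0` the constraints say exactly `z = 0 ≥ ẑ`, and fixing `δ = 1` exactly `z = ẑ ≥ 0`;
in each case the one remaining inequality (`l ≤ ẑ`, resp. `ẑ ≤ u`) is guaranteed by the bounds.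
These two cases are the two branches of `max ẑ 0`.
-/

def ReluBigM (l u zhat z δ : ℝ) : Prop :=
  zhat ≤ z ∧ 0 ≤ z ∧ z ≤ zhat - l * (1 - δ) ∧ z ≤ u * δ

section ReluBigM

variable {l u zhat z : ℝ}

theorem reluBigM_zero_iff : ReluBigM l u zhat z 0 ↔ z = 0 ∧ l ≤ zhat ∧ zhat ≤ 0 := by
  simp only [ReluBigM, sub_zero, mul_one, mul_zero]
  constructor
  · rintro ⟨hlow, hnonneg, hup, hzero⟩
    obtain rfl : z = 0 := le_antisymm hzero hnonneg
    exact ⟨rfl, by linarith, hlow⟩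
  · rintro ⟨rfl, hl, hzhat⟩
    exact ⟨hzhat, le_rfl, by linarith, le_rfl⟩

theorem reluBigM_one_iff : ReluBigM l u zhat z 1 ↔ z = zhat ∧ 0 ≤ zhat ∧ zhat ≤ u := by
  simp only [ReluBigM, sub_self, mul_zero, sub_zero, mul_one]
  constructor
  · rintro ⟨hlow, hnonneg, hup, hu⟩
    obtain rfl : z = zhat := le_antisymm hup hlow
    exact ⟨rfl, hnonneg, hu⟩
  · rintro ⟨rfl, hnonneg, hu⟩
    exact ⟨le_rfl, hnonneg, le_rfl, hu⟩

end ReluBigM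

theorem stmt_3_general (z zhat l u : ℝ) (hlz : l ≤ zhat) (hzu : zhat ≤ u) :
    (∃ δ : ℝ, (δ = 0 ∨ δ = 1) ∧
      zhat ≤ z ∧ 0 ≤ z ∧ z ≤ zhat - l * (1 - δ) ∧ z ≤ u * δ) ↔ z = max zhat 0 := by
  change (∃ δ : ℝ, (δ = 0 ∨ δ = 1) ∧ ReluBigM l u zhat z δ) ↔ _
  simp only [or_and_right, exists_or, exists_eq_left, reluBigM_zero_iff, reluBigM_one_iff,
    eq_comm (a := z), max_eq_iff]
  tauto

theorem stmt_3 (z zhat l u : ℝ) (hl : l < 0) (hu : 0 < u) (hlz : l ≤ zhat) (hzu : zhat ≤ u) :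
    (∃ δ : ℝ, (δ = 0 ∨ δ = 1) ∧
      zhat ≤ z ∧ 0 ≤ z ∧ z ≤ zhat - l * (1 - δ) ∧ z ≤ u * δ) ↔ z = max zhat 0 :=
  stmt_3_general z zhat l u hlz hzu
end

section
/- Let φ, φ₀ : ℝ → ℝ be differentiable functions with φ(0) ≤ 0 and φ₀(0) ≤ 0, and suppose that for all t, whenever max(φ(t), φ₀(t)) = 0 we have (φ₀(t) = 0 → φ₀'(t) ≤ -c) and (φ(t) = 0 → φ'(t) ≤ -c) for some c > 0. Then for all t ≥ 0, max(φ(t), φ₀(t)) ≤ 0. -/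
/-!
On the boundary `max φ φ₀ = 0` every component that vanishes has strictly negative derivative,
so it becomes negative immediately to the right, while the components that are already negative
stay so by continuity. Hence the closed set `{max φ φ₀ ≤ 0}` is a right neighbourhood of each of
its points, and such a closed set containing `0` contains all of `[0, ∞)`.
-/

open Filter Set Topology

theorem HasDerivAt.eventually_lt_nhdsGT {f : ℝ → ℝ} {f' x : ℝ} (hf : HasDerivAt f f' x)
    (hf' : f' < 0) : ∀ᶠ t in 𝓝[>] x, f t < f x := by
  filter_upwards [hf.hasDerivWithinAt.limsup_slope_le' (lt_irrefl x) hf', self_mem_nhdsWithin]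
    with t hslope hxt
  rw [slope_def_field, div_lt_iff₀ (sub_pos.2 hxt), zero_mul, sub_neg] at hslope
  exact hslope

theorem eventually_neg_nhdsGT_of_nonpos {f : ℝ → ℝ} {x : ℝ} (hf : DifferentiableAt ℝ f x)
    (hx : f x ≤ 0) (hderiv : f x = 0 → deriv f x < 0) : ∀ᶠ t in 𝓝[>] x, f t < 0 := by
  rcases hx.lt_or_eq with hneg | hzero
  · exact nhdsWithin_le_nhds (hf.continuousAt.eventually_lt continuousAt_const hneg)
  · simpa only [hzero] using hf.hasDerivAt.eventually_lt_nhdsGT (hderiv hzero)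

theorem nonpos_of_forall_eventually_nonpos_nhdsGT {ψ : ℝ → ℝ} (hψ : Continuous ψ) {a : ℝ}
    (ha : ψ a ≤ 0) (hzero : ∀ x, ψ x = 0 → ∀ᶠ t in 𝓝[>] x, ψ t ≤ 0) :
    ∀ t, a ≤ t → ψ t ≤ 0 := by
  intro t hat
  have hclosed : IsClosed {x | ψ x ≤ 0} := isClosed_le hψ continuous_const
  refine (hclosed.inter isClosed_Icc).Icc_subset_of_forall_mem_nhdsWithin ha ?_ ⟨hat, le_rfl⟩
  rintro x ⟨hx, -⟩
  rcases (show ψ x ≤ 0 from hx).lt_or_eq with hneg | hx0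
  · exact nhdsWithin_le_nhds ((hψ.continuousAt.eventually_lt continuousAt_const hneg).mono
      fun _ ↦ le_of_lt)
  · exact hzero x hx0

theorem stmt_7 (φ φ₀ : ℝ → ℝ) (c : ℝ) (hc : 0 < c)
    (hφ : Differentiable ℝ φ) (hφ₀ : Differentiable ℝ φ₀)
    (h0 : φ 0 ≤ 0) (h0' : φ₀ 0 ≤ 0)
    (hdec : ∀ t, max (φ t) (φ₀ t) = 0 →
      (φ₀ t = 0 → deriv φ₀ t ≤ -c) ∧ (φ t = 0 → deriv φ t ≤ -c)) :
    ∀ t, 0 ≤ t → max (φ t) (φ₀ t) ≤ 0 := by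
  refine nonpos_of_forall_eventually_nonpos_nhdsGT (hφ.continuous.max hφ₀.continuous)
    (max_le h0 h0') fun x hx ↦ ?_
  obtain ⟨hdec₀, hdec₁⟩ := hdec x hx
  obtain ⟨hφx, hφ₀x⟩ := max_le_iff.1 hx.le
  have hφ_neg := eventually_neg_nhdsGT_of_nonpos (hφ x) hφx
    fun h ↦ (hdec₁ h).trans_lt (neg_neg_of_pos hc)
  have hφ₀_neg := eventually_neg_nhdsGT_of_nonpos (hφ₀ x) hφ₀x
    fun h ↦ (hdec₀ h).trans_lt (neg_neg_of_pos hc)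
  filter_upwards [hφ_neg, hφ₀_neg] with t hφt hφ₀t
  exact max_le hφt.le hφ₀t.le
end

section
/- Consider the discrete update x_{k+1} = x_k + f(x_k, u_k)·dt, and suppose at every step the constraint φ(x_{k+1}) ≤ max{0, φ(x_k) - γ·dt} holds with γ, dt > 0. Then: (i) if φ(x_0) ≤ 0, then φ(x_k) ≤ 0 for all k (forward invariance); (ii) if φ(x_0) > 0, then φ(x_k) ≤ 0 for all k ≥ ⌈φ(x_0)/(γ·dt)⌉ (finite-step convergence). -/
section DecreasingToZero

variable {α : Type*} [AddCommGroup α] [LinearOrder α] [IsOrderedAddMonoid α]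
  {a : ℕ → α} {c : α}

theorem le_max_zero_sub_nsmul (hc : 0 ≤ c) (h : ∀ k, a (k + 1) ≤ max 0 (a k - c)) (k : ℕ) :
    a k ≤ max 0 (a 0 - k • c) := by
  induction k with
  | zero => simp
  | succ k ih =>
    calc a (k + 1) ≤ max 0 (a k - c) := h k
      _ ≤ max 0 (max 0 (a 0 - k • c) - c) := by gcongr
      _ ≤ max 0 (a 0 - (k + 1) • c) := by
        rw [← max_sub_sub_right, succ_nsmul, ← sub_sub]
        exact max_le (le_max_left _ _)
          (max_le (le_max_of_le_left (sub_nonpos.mpr hc)) (le_max_right _ _))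

theorem nonpos_of_le_nsmul (hc : 0 ≤ c) (h : ∀ k, a (k + 1) ≤ max 0 (a k - c)) {k : ℕ}
    (hk : a 0 ≤ k • c) : a k ≤ 0 :=
  (le_max_zero_sub_nsmul hc h k).trans_eq (max_eq_left (sub_nonpos.mpr hk))

end DecreasingToZero

theorem stmt_17_general {n : ℕ}
    (φ : EuclideanSpace ℝ (Fin n) → ℝ)
    (x : ℕ → EuclideanSpace ℝ (Fin n))
    (γ dt : ℝ) (hγ : 0 < γ) (hdt : 0 < dt)
    (hsafe : ∀ k, φ (x (k + 1)) ≤ max 0 (φ (x k) - γ * dt)) :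
    (φ (x 0) ≤ 0 → ∀ k, φ (x k) ≤ 0) ∧
    (0 < φ (x 0) → ∀ k : ℕ, ⌈φ (x 0) / (γ * dt)⌉ ≤ (k : ℤ) → φ (x k) ≤ 0) := by
  have hγdt : 0 < γ * dt := mul_pos hγ hdt
  have decay {k : ℕ} : φ (x 0) ≤ k • (γ * dt) → φ (x k) ≤ 0 :=
    nonpos_of_le_nsmul (a := fun k => φ (x k)) hγdt.le hsafe
  refine ⟨fun h0 k => decay (h0.trans (nsmul_nonneg hγdt.le k)), fun _ k hk => decay ?_⟩
  rw [nsmul_eq_mul, ← div_le_iff₀ hγdt]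
  exact_mod_cast Int.ceil_le.mp hk

theorem stmt_17 {n : ℕ} {U : Type*}
    (f : EuclideanSpace ℝ (Fin n) → U → EuclideanSpace ℝ (Fin n))
    (φ : EuclideanSpace ℝ (Fin n) → ℝ)
    (x : ℕ → EuclideanSpace ℝ (Fin n)) (u : ℕ → U)
    (γ dt : ℝ) (hγ : 0 < γ) (hdt : 0 < dt)
    (hstep : ∀ k, x (k + 1) = x k + dt • f (x k) (u k))
    (hsafe : ∀ k, φ (x (k + 1)) ≤ max 0 (φ (x k) - γ * dt)) :
    (φ (x 0) ≤ 0 → ∀ k, φ (x k) ≤ 0) ∧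
    (0 < φ (x 0) → ∀ k : ℕ, ⌈φ (x 0) / (γ * dt)⌉ ≤ (k : ℤ) → φ (x k) ≤ 0) :=
  stmt_17_general φ x γ dt hγ hdt hsafe
end
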